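/- For integers a ≥ 1, t ≥ 0 and reals c > 0, f > 0, ∫_0^∞ x^{a + t/2 - 1} e^{-cx} I_t(2√(f x)) dx = ((t+a-1)!/c^{t/2+a}) · (f/c)^{t/2} · e^{f/c} · ∑_{r=0}^{a-1} C(a-1, r) · (f/c)^r / (t+r)!, where I_t is the modified Bessel function of the first kind of order t. -/

import Mathlib

open MeasureTheory

/-- The modified Bessel function of the first kind of integer order `t`:
`I_t(x) = ∑_{k=0}^∞ (x/2)^{t+2k} / (k! (t+k)!)`. -/
noncomputable def besselI (t : ℕ) (x : ℝ) : ℝ :=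
  ∑' k : ℕ, (x / 2) ^ (t + 2 * k) / ((Nat.factorial k : ℝ) * Nat.factorial (t + k))

/-!
Expanding `I_t(2√(fx)) = ∑ₖ (fx)^{t/2+k} / (k! (t+k)!)` and integrating term by term against
`∫₀^∞ xⁿ e^{-cx} dx = n! / c^{n+1}` (legitimate because every term is nonnegative) reduces the
claim, with `a = b + 1` and `u = f/c`, to the power series identity
`∑ₖ (t+b+k)! / (k! (t+k)!) uᵏ = (t+b)! eᵘ ∑_{r ≤ b} C(b,r) uʳ / (t+r)!`.
Vandermonde's identity `C(t+b+k, b) = ∑_{r ≤ b} C(t+b, b-r) C(k, r)` splits the coefficient on the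
left into multiples of `C(k,r) / k!`, and `∑ₖ C(k,r) uᵏ / k! = uʳ eᵘ / r!`.
-/

open Real Finset
open scoped Nat

theorem hasSum_choose_mul_pow_div_factorial (u : ℝ) (r : ℕ) :
    HasSum (fun k : ℕ ↦ (k.choose r : ℝ) * u ^ k / k !) (u ^ r / r ! * exp u) := by
  rw [← hasSum_nat_add_iff' r]
  have hvanish : ∑ k ∈ range r, (k.choose r : ℝ) * u ^ k / k ! = 0 :=
    sum_eq_zero fun k hk ↦ by simp [Nat.choose_eq_zero_of_lt (mem_range.mp hk)]
  have hshift (m : ℕ) : ((m + r).choose r : ℝ) * u ^ (m + r) / (m + r)! =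
      u ^ r / r ! * (u ^ m / m !) := by
    have h' : ((m + r).choose r : ℝ) * m ! * r ! = (m + r)! := by
      exact_mod_cast Nat.add_choose_mul_factorial_mul_factorial m r
    field_simp
    rw [← h']
    ring
  simpa only [hvanish, sub_zero, hshift, exp_eq_exp_ℝ] using
    (NormedSpace.expSeries_div_hasSum_exp u).mul_left (u ^ r / r !)

theorem factorial_add_div_factorial_mul_factorial (t b k : ℕ) :
    ((t + b + k)! : ℝ) / (k ! * (t + k)!) =
      (t + b)! * ∑ r ∈ range (b + 1),
        (b.choose r : ℝ) * r ! / (t + r)! * ((k.choose r : ℝ) / k !) := by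
  have hvandermonde :
      (t + b + k).choose b = ∑ r ∈ range (b + 1), (t + b).choose (b - r) * k.choose r := by
    rw [Nat.add_choose_eq,
      Nat.sum_antidiagonal_eq_sum_range_succ (fun i j ↦ (t + b).choose i * k.choose j),
      ← sum_range_reflect]
    refine sum_congr rfl fun r hr ↦ ?_
    have := mem_range.mp hr
    congr 2; omega
  have hchoose : ((t + b + k).choose b : ℝ) * b ! * (t + k)! = (t + b + k)! := by
    have h := Nat.choose_mul_factorial_mul_factorial (by omega : b ≤ t + b + k)
    rw [show t + b + k - b = t + k by omega] at h
    exact_mod_cast h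
  have hterm (r : ℕ) (hr : r ≤ b) :
      ((t + b).choose (b - r) : ℝ) * b ! * (t + r)! = (t + b)! * b.choose r * r ! := by
    have h1 := Nat.choose_mul_factorial_mul_factorial (by omega : b - r ≤ t + b)
    have h2 := Nat.choose_mul_factorial_mul_factorial hr
    rw [show t + b - (b - r) = t + r by omega] at h1
    rw [← h1, ← h2]; push_cast; ring
  rw [← hchoose, hvandermonde, mul_sum]
  push_cast
  rw [sum_mul, sum_mul, sum_div]
  refine sum_congr rfl fun r hr ↦ ?_
  have := hterm r (Nat.lt_succ_iff.mp (mem_range.mp hr))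
  field_simp
  linear_combination (k.choose r : ℝ) * this

theorem hasSum_factorial_div_mul_pow (t b : ℕ) (u : ℝ) :
    HasSum (fun k : ℕ ↦ ((t + b + k)! : ℝ) / (k ! * (t + k)!) * u ^ k)
      ((t + b)! * exp u * ∑ r ∈ range (b + 1), (b.choose r : ℝ) * u ^ r / (t + r)!) := by
  have hcoef (k : ℕ) : ((t + b + k)! : ℝ) / (k ! * (t + k)!) * u ^ k = ∑ r ∈ range (b + 1),
      (t + b)! * ((b.choose r : ℝ) * r ! / (t + r)!) * ((k.choose r : ℝ) * u ^ k / k !) := by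
    rw [factorial_add_div_factorial_mul_factorial, mul_assoc, sum_mul, mul_sum]
    refine sum_congr rfl fun r _ ↦ ?_
    ring
  have hvalue : (t + b)! * exp u * ∑ r ∈ range (b + 1), (b.choose r : ℝ) * u ^ r / (t + r)! =
      ∑ r ∈ range (b + 1),
        (t + b)! * ((b.choose r : ℝ) * r ! / (t + r)!) * (u ^ r / r ! * exp u) := by
    rw [mul_sum]
    refine sum_congr rfl fun r _ ↦ ?_
    field_simp
  rw [funext hcoef, hvalue]
  exact hasSum_sum fun r _ ↦ (hasSum_choose_mul_pow_div_factorial u r).mul_left _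

theorem integral_pow_mul_exp_neg_mul_Ioi (n : ℕ) {c : ℝ} (hc : 0 < c) :
    ∫ x in Set.Ioi (0 : ℝ), x ^ n * exp (-(c * x)) = n ! / c ^ (n + 1) := by
  have h := integral_rpow_mul_exp_neg_mul_Ioi (by positivity : (0 : ℝ) < n + 1) hc
  simp only [add_sub_cancel_right, rpow_natCast, Gamma_nat_eq_factorial] at h
  rw [h, ← rpow_natCast, Nat.cast_add_one, div_rpow zero_le_one hc.le, one_rpow]
  ring

theorem integrableOn_pow_mul_exp_neg_mul_Ioi (n : ℕ) {c : ℝ} (hc : 0 < c) :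
    IntegrableOn (fun x : ℝ ↦ x ^ n * exp (-(c * x))) (Set.Ioi 0) :=
  .of_integral_ne_zero (by rw [integral_pow_mul_exp_neg_mul_Ioi n hc]; positivity)

theorem integral_tsum_of_nonneg {ι α : Type*} [Countable ι] [MeasurableSpace α] {μ : Measure α}
    {F : ι → α → ℝ} {s : ℝ} (hF_int : ∀ i, Integrable (F i) μ) (hF_nonneg : ∀ i, 0 ≤ᵐ[μ] F i)
    (hs : HasSum (fun i ↦ ∫ a, F i a ∂μ) s) :
    ∫ a, ∑' i, F i a ∂μ = s := by
  have hnorm (i : ι) : ∫ a, ‖F i a‖ ∂μ = ∫ a, F i a ∂μ :=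
    integral_congr_ae <| (hF_nonneg i).mono fun a ha ↦ Real.norm_of_nonneg ha
  exact (hasSum_integral_of_summable_integral_norm hF_int
    (by simpa only [hnorm] using hs.summable)).unique hs

theorem besselI_two_mul_sqrt (t : ℕ) {y : ℝ} (hy : 0 ≤ y) :
    besselI t (2 * √y) = ∑' k : ℕ, y ^ ((t : ℝ) / 2 + k) / (k ! * (t + k)!) := by
  unfold besselI
  congr 1 with k
  rw [mul_div_cancel_left₀ _ two_ne_zero, sqrt_eq_rpow, ← rpow_natCast, ← rpow_mul hy]
  push_cast
  ring_nf

theorem rpow_mul_exp_mul_besselI_eq_tsum (t b : ℕ) {c f x : ℝ} (hf : 0 < f) (hx : 0 < x) :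
    x ^ ((b : ℝ) + t / 2) * exp (-c * x) * besselI t (2 * √(f * x)) = ∑' k : ℕ,
      f ^ ((t : ℝ) / 2) * (f ^ k / (k ! * (t + k)!)) * (x ^ (t + b + k) * exp (-(c * x))) := by
  rw [besselI_two_mul_sqrt t (by positivity), ← tsum_mul_left]
  congr 1 with k
  rw [mul_rpow hf.le hx.le, rpow_add hf, rpow_natCast, ← rpow_natCast x,
    show ((t + b + k : ℕ) : ℝ) = (b + t / 2) + (t / 2 + k) by push_cast; ring,
    rpow_add hx (b + t / 2), neg_mul]
  ring

/-- For integers `a ≥ 1`, `t ≥ 0` and reals `c > 0`, `f > 0`,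
`∫_0^∞ x^{a+t/2-1} e^{-cx} I_t(2√(fx)) dx
  = ((t+a-1)!/c^{t/2+a}) (f/c)^{t/2} e^{f/c} ∑_{r=0}^{a-1} C(a-1,r)(f/c)^r/(t+r)!`. -/
theorem integral_rpow_exp_besselI (a t : ℕ) (ha : 1 ≤ a) (c f : ℝ)
    (hc : 0 < c) (hf : 0 < f) :
    ∫ x in Set.Ioi (0 : ℝ),
        x ^ ((a : ℝ) + (t : ℝ) / 2 - 1) * Real.exp (-c * x) *
          besselI t (2 * Real.sqrt (f * x)) =
      (Nat.factorial (t + a - 1) : ℝ) / c ^ ((t : ℝ) / 2 + (a : ℝ)) *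
        (f / c) ^ ((t : ℝ) / 2) * Real.exp (f / c) *
        ∑ r ∈ Finset.range a,
          (Nat.choose (a - 1) r : ℝ) * (f / c) ^ r / (Nat.factorial (t + r) : ℝ) := by
  obtain ⟨b, rfl⟩ : ∃ b, a = b + 1 := ⟨a - 1, by omega⟩
  set F : ℕ → ℝ → ℝ := fun k x ↦
    f ^ ((t : ℝ) / 2) * (f ^ k / (k ! * (t + k)!)) * (x ^ (t + b + k) * exp (-(c * x)))
  have hseries : Set.EqOn (fun x ↦ x ^ (((b + 1 : ℕ) : ℝ) + t / 2 - 1) * exp (-c * x) *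
      besselI t (2 * √(f * x))) (fun x ↦ ∑' k, F k x) (Set.Ioi 0) := fun x hx ↦ by
    simp only [show ((b + 1 : ℕ) : ℝ) + t / 2 - 1 = b + t / 2 by push_cast; ring]
    exact rpow_mul_exp_mul_besselI_eq_tsum t b hf hx
  have hF_int (k : ℕ) : IntegrableOn (F k) (Set.Ioi 0) :=
    (integrableOn_pow_mul_exp_neg_mul_Ioi _ hc).const_mul _
  have hF_nonneg (k : ℕ) : 0 ≤ᵐ[volume.restrict (Set.Ioi 0)] F k := by
    filter_upwards [ae_restrict_mem measurableSet_Ioi] with x (hx : 0 < x)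
    positivity
  have hF_integral (k : ℕ) : ∫ x in Set.Ioi 0, F k x =
      f ^ ((t : ℝ) / 2) / c ^ (t + b + 1) * ((t + b + k)! / (k ! * (t + k)!) * (f / c) ^ k) := by
    rw [integral_const_mul, integral_pow_mul_exp_neg_mul_Ioi _ hc, div_pow]
    field_simp
    ring
  have hsum := (hasSum_factorial_div_mul_pow t b (f / c)).mul_left
    (f ^ ((t : ℝ) / 2) / c ^ (t + b + 1))
  rw [← funext hF_integral] at hsum
  rw [setIntegral_congr_fun measurableSet_Ioi hseries,
    integral_tsum_of_nonneg hF_int hF_nonneg hsum]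
  have hpow : f ^ ((t : ℝ) / 2) / c ^ (t + b + 1) =
      (f / c) ^ ((t : ℝ) / 2) / c ^ ((t : ℝ) / 2 + ((b + 1 : ℕ) : ℝ)) := by
    rw [div_rpow hf.le hc.le, div_div, ← rpow_add hc, ← rpow_natCast]
    congr 2
    push_cast
    ring
  rw [show t + (b + 1) - 1 = t + b by omega, Nat.add_sub_cancel, hpow]
  ring
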